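/- Under the setup of the alternating minimization for F(X1, C, B, D) = ‖(A1 − X1) ⊙ W1‖_F² + ‖A2 − X1C − BD‖_F² (sequences (X1)_p, C_p, B_p, D_p satisfying the first-order stationarity equations, m_p = F((X1)_p, C_p, B_p, D_p)), assume Σ_{p=1}^∞ √(m_p − m_{p+1}) < ∞. If there exists δ > 0 such that D_pD_pᵀ ≥ δ·I_{r−k} (in the positive semidefinite order) for all sufficiently large p, then lim_{p→∞} B_p exists. -/

import Mathlib

/-!
Each block update of the alternating minimisation solves a least-squares problem exactly, so by
Pythagoras the objective drops by at least `‖(B_{p+1} − B_p)D_p‖²` at step `p`. Once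
`D_pD_pᵀ ⪰ δI`, this is at least `δ‖B_{p+1} − B_p‖²`, so the steps `‖B_{p+1} − B_p‖` are
bounded by `√(m_p − m_{p+1}) / √δ`, a summable sequence, and `(B_p)` is Cauchy.
-/

open Matrix Filter Topology

noncomputable def frob {α β : Type*} [Fintype α] [Fintype β] (M : Matrix α β ℝ) : ℝ :=
  Real.sqrt (∑ i, ∑ j, (M i j) ^ 2)

noncomputable def projCol {m k : ℕ} (B : Matrix (Fin m) (Fin k) ℝ) :
    Matrix (Fin m) (Fin m) ℝ :=
  B * (Bᵀ * B)⁻¹ * Bᵀ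

section Frobenius

variable {α β γ κ : Type*} [Fintype α] [Fintype β] [Fintype γ] [Fintype κ]

lemma frob_sq_eq_trace (M : Matrix α β ℝ) : frob M ^ 2 = (M * Mᵀ).trace := by
  rw [frob, Real.sq_sqrt (by positivity), ← sum_hadamard_eq]
  simp only [hadamard_apply, sq]

lemma frob_add_sq (U V : Matrix α β ℝ) :
    frob (U + V) ^ 2 = frob U ^ 2 + 2 * (U * Vᵀ).trace + frob V ^ 2 := by
  have hsymm : (V * Uᵀ).trace = (U * Vᵀ).trace := by
    rw [← trace_transpose, transpose_mul, transpose_transpose]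
  simp only [frob_sq_eq_trace, transpose_add, Matrix.add_mul, Matrix.mul_add, trace_add, hsymm]
  ring

lemma frob_add_sq_of_trace_eq_zero {U V : Matrix α β ℝ} (h : (U * Vᵀ).trace = 0) :
    frob (U + V) ^ 2 = frob U ^ 2 + frob V ^ 2 := by
  rw [frob_add_sq, h]; ring

lemma frob_sq_le_add_mul_of_transpose_mul_eq_zero {R : Matrix α γ ℝ} {X : Matrix α β ℝ}
    (h : Xᵀ * R = 0) (E : Matrix β γ ℝ) : frob R ^ 2 ≤ frob (R + X * E) ^ 2 := by
  have hcross : (R * (X * E)ᵀ).trace = 0 := by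
    rw [transpose_mul, ← Matrix.mul_assoc, trace_mul_comm, ← Matrix.mul_assoc, h,
      Matrix.zero_mul, trace_zero]
  rw [frob_add_sq_of_trace_eq_zero hcross]
  nlinarith [sq_nonneg (frob (X * E))]

lemma frob_add_mul_sq_of_mul_transpose_eq_zero {R : Matrix α γ ℝ} {D : Matrix κ γ ℝ}
    (h : R * Dᵀ = 0) (E : Matrix α κ ℝ) :
    frob (R + E * D) ^ 2 = frob R ^ 2 + frob (E * D) ^ 2 := by
  refine frob_add_sq_of_trace_eq_zero ?_
  rw [transpose_mul, ← Matrix.mul_assoc, h, Matrix.zero_mul, trace_zero]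

lemma trace_hadamard_mul_transpose_hadamard (U V W : Matrix α β ℝ) :
    ((U ⊙ W) * (V ⊙ W)ᵀ).trace = ((U ⊙ W ⊙ W) * Vᵀ).trace := by
  simp only [← sum_hadamard_eq, hadamard_apply]
  exact Finset.sum_congr rfl fun i _ => Finset.sum_congr rfl fun j _ => by ring

lemma frob_hadamard_sq_add_frob_sq_le {A W X₀ X₁ : Matrix α β ℝ} {R : Matrix α γ ℝ}
    {C : Matrix β γ ℝ} (h : (X₁ - A) ⊙ W ⊙ W = R * Cᵀ) :
    frob ((A - X₁) ⊙ W) ^ 2 + frob R ^ 2 ≤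
      frob ((A - X₀) ⊙ W) ^ 2 + frob (R + (X₁ - X₀) * C) ^ 2 := by
  have hsplit : (A - X₀) ⊙ W = (A - X₁) ⊙ W + (X₁ - X₀) ⊙ W := by
    rw [← add_hadamard, sub_add_sub_cancel]
  have hcross :
      ((A - X₁) ⊙ W * ((X₁ - X₀) ⊙ W)ᵀ).trace + (R * ((X₁ - X₀) * C)ᵀ).trace = 0 := by
    rw [trace_hadamard_mul_transpose_hadamard, transpose_mul, ← Matrix.mul_assoc, ← h,
      ← trace_add, ← Matrix.add_mul, ← add_hadamard, ← add_hadamard, sub_add_sub_cancel,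
      sub_self, zero_hadamard, zero_hadamard, Matrix.zero_mul, trace_zero]
  rw [hsplit, frob_add_sq, frob_add_sq]
  nlinarith [sq_nonneg (frob ((X₁ - X₀) ⊙ W)), sq_nonneg (frob ((X₁ - X₀) * C))]

lemma smul_frob_sq_le_frob_mul_sq [DecidableEq κ] {D : Matrix κ γ ℝ} {δ : ℝ}
    (hD : (D * Dᵀ - δ • (1 : Matrix κ κ ℝ)).PosSemidef) (E : Matrix α κ ℝ) :
    δ * frob E ^ 2 ≤ frob (E * D) ^ 2 := by
  have hpsd := (hD.mul_mul_conjTranspose_same E).trace_nonneg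
  rw [conjTranspose_eq_transpose_of_trivial, Matrix.mul_sub, Matrix.sub_mul, trace_sub,
    Matrix.mul_smul, Matrix.smul_mul, Matrix.mul_one, trace_smul, smul_eq_mul, sub_nonneg]
    at hpsd
  rwa [frob_sq_eq_trace, frob_sq_eq_trace, transpose_mul, ← Matrix.mul_assoc,
    Matrix.mul_assoc E]

attribute [local instance] Matrix.frobeniusNormedAddCommGroup in
lemma frob_eq_norm (M : Matrix α β ℝ) : frob M = ‖M‖ := by
  simp [frob, frobenius_norm_def, Real.sqrt_eq_rpow]

attribute [local instance] Matrix.frobeniusNormedAddCommGroup in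
lemma exists_tendsto_of_frob_sub_le {B : ℕ → Matrix α β ℝ} {d : ℕ → ℝ} (hd : Summable d)
    (hB : ∀ᶠ p in atTop, frob (B (p + 1) - B p) ≤ d p) : ∃ L, Tendsto B atTop (𝓝 L) := by
  have hsum : Summable fun p => dist (B p) (B (p + 1)) := by
    refine hd.of_norm_bounded_eventually_nat ?_
    filter_upwards [hB] with p hp
    rwa [Real.norm_of_nonneg dist_nonneg, dist_comm, dist_eq_norm, ← frob_eq_norm]
  exact cauchySeq_tendsto_of_complete (cauchySeq_of_summable_dist hsum)

noncomputable def objective (A₁ W : Matrix α β ℝ) (A₂ : Matrix α γ ℝ) (X : Matrix α β ℝ)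
    (C : Matrix β γ ℝ) (B : Matrix α κ ℝ) (D : Matrix κ γ ℝ) : ℝ :=
  frob ((A₁ - X) ⊙ W) ^ 2 + frob (A₂ - X * C - B * D) ^ 2

lemma frob_mul_sub_sq_le_objective_sub {A₁ W X₀ X₁ : Matrix α β ℝ} {A₂ : Matrix α γ ℝ}
    {C₀ C₁ : Matrix β γ ℝ} {B₀ B₁ : Matrix α κ ℝ} {D₀ D₁ : Matrix κ γ ℝ}
    (hX : (X₁ - A₁) ⊙ W ⊙ W = (A₂ - X₁ * C₀ - B₀ * D₀) * C₀ᵀ)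
    (hC : X₁ᵀ * (A₂ - X₁ * C₁ - B₀ * D₀) = 0)
    (hB : (A₂ - X₁ * C₁ - B₁ * D₀) * D₀ᵀ = 0)
    (hD : B₁ᵀ * (A₂ - X₁ * C₁ - B₁ * D₁) = 0) :
    frob ((B₁ - B₀) * D₀) ^ 2 ≤
      objective A₁ W A₂ X₀ C₀ B₀ D₀ - objective A₁ W A₂ X₁ C₁ B₁ D₁ := by
  have stepX := frob_hadamard_sq_add_frob_sq_le (X₀ := X₀) hX
  have stepC := frob_sq_le_add_mul_of_transpose_mul_eq_zero hC (C₁ - C₀)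
  have stepB := frob_add_mul_sq_of_mul_transpose_eq_zero hB (B₁ - B₀)
  have stepD := frob_sq_le_add_mul_of_transpose_mul_eq_zero hD (D₁ - D₀)
  have eX : A₂ - X₁ * C₀ - B₀ * D₀ + (X₁ - X₀) * C₀ = A₂ - X₀ * C₀ - B₀ * D₀ := by
    rw [Matrix.sub_mul]; abel
  have eC : A₂ - X₁ * C₁ - B₀ * D₀ + X₁ * (C₁ - C₀) = A₂ - X₁ * C₀ - B₀ * D₀ := by
    rw [Matrix.mul_sub]; abel
  have eB : A₂ - X₁ * C₁ - B₁ * D₀ + (B₁ - B₀) * D₀ = A₂ - X₁ * C₁ - B₀ * D₀ := by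
    rw [Matrix.sub_mul]; abel
  have eD : A₂ - X₁ * C₁ - B₁ * D₁ + B₁ * (D₁ - D₀) = A₂ - X₁ * C₁ - B₁ * D₀ := by
    rw [Matrix.mul_sub]; abel
  rw [eX] at stepX; rw [eC] at stepC; rw [eB] at stepB; rw [eD] at stepD
  unfold objective
  linarith

end Frobenius

theorem stmt_18_general
    {m k l s : ℕ}
    (A1 : Matrix (Fin m) (Fin k) ℝ) (A2 : Matrix (Fin m) (Fin l) ℝ)
    (W1 : Matrix (Fin m) (Fin k) ℝ)
    (X1 : ℕ → Matrix (Fin m) (Fin k) ℝ) (C : ℕ → Matrix (Fin k) (Fin l) ℝ)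
    (B : ℕ → Matrix (Fin m) (Fin s) ℝ) (D : ℕ → Matrix (Fin s) (Fin l) ℝ)
    (mseq : ℕ → ℝ)
    (hm : ∀ p, mseq p = frob (Matrix.hadamard (A1 - X1 p) W1) ^ 2 +
      frob (A2 - X1 p * C p - B p * D p) ^ 2)
    (heq1 : ∀ p, Matrix.hadamard (Matrix.hadamard (X1 (p + 1) - A1) W1) W1 =
      (A2 - X1 (p + 1) * C p - B p * D p) * (C p)ᵀ)
    (heq2 : ∀ p, (X1 (p + 1))ᵀ * (A2 - X1 (p + 1) * C (p + 1) - B p * D p) = 0)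
    (heq3 : ∀ p, (A2 - X1 (p + 1) * C (p + 1) - B (p + 1) * D p) * (D p)ᵀ = 0)
    (heq4 : ∀ p, (B (p + 1))ᵀ * (A2 - X1 (p + 1) * C (p + 1) - B (p + 1) * D (p + 1)) = 0)
    (hsum : Summable (fun p => Real.sqrt (mseq p - mseq (p + 1))))
    (δ : ℝ) (hδ : 0 < δ) (N : ℕ)
    (hD : ∀ p, N ≤ p → (D p * (D p)ᵀ - δ • (1 : Matrix (Fin s) (Fin s) ℝ)).PosSemidef)
    :
    ∃ Bs : Matrix (Fin m) (Fin s) ℝ, Tendsto B atTop (nhds Bs) := by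
  have hdecrease (p : ℕ) : frob ((B (p + 1) - B p) * D p) ^ 2 ≤ mseq p - mseq (p + 1) := by
    simpa only [hm, objective] using
      frob_mul_sub_sq_le_objective_sub (X₀ := X1 p) (heq1 p) (heq2 p) (heq3 p) (heq4 p)
  have hstep (p : ℕ) (hp : N ≤ p) :
      frob (B (p + 1) - B p) ≤ Real.sqrt (mseq p - mseq (p + 1)) / Real.sqrt δ := by
    rw [← Real.sqrt_div' _ hδ.le]
    refine Real.le_sqrt_of_sq_le ((le_div_iff₀ hδ).2 ?_)
    rw [mul_comm]
    exact (smul_frob_sq_le_frob_mul_sq (hD p hp) _).trans (hdecrease p)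
  exact exists_tendsto_of_frob_sub_le (hsum.div_const _) (eventually_atTop.2 ⟨N, hstep⟩)

/-- **Theorem 4.4 (ii).** If `Σ √(m_p − m_{p+1}) < ∞` and `D_pD_pᵀ ≥ δ·I` (in the positive
semidefinite order) for all large `p` and some `δ > 0`, then `lim B_p` exists. -/
theorem stmt_18
    {m k l s : ℕ}
    (A1 : Matrix (Fin m) (Fin k) ℝ) (A2 : Matrix (Fin m) (Fin l) ℝ)
    (W1 : Matrix (Fin m) (Fin k) ℝ) (hW1 : ∀ i j, 0 < W1 i j)
    (X1 : ℕ → Matrix (Fin m) (Fin k) ℝ) (C : ℕ → Matrix (Fin k) (Fin l) ℝ)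
    (B : ℕ → Matrix (Fin m) (Fin s) ℝ) (D : ℕ → Matrix (Fin s) (Fin l) ℝ)
    (mseq : ℕ → ℝ)
    (hm : ∀ p, mseq p = frob (Matrix.hadamard (A1 - X1 p) W1) ^ 2 +
      frob (A2 - X1 p * C p - B p * D p) ^ 2)
    (heq1 : ∀ p, Matrix.hadamard (Matrix.hadamard (X1 (p + 1) - A1) W1) W1 =
      (A2 - X1 (p + 1) * C p - B p * D p) * (C p)ᵀ)
    (heq2 : ∀ p, (X1 (p + 1))ᵀ * (A2 - X1 (p + 1) * C (p + 1) - B p * D p) = 0)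
    (heq3 : ∀ p, (A2 - X1 (p + 1) * C (p + 1) - B (p + 1) * D p) * (D p)ᵀ = 0)
    (heq4 : ∀ p, (B (p + 1))ᵀ * (A2 - X1 (p + 1) * C (p + 1) - B (p + 1) * D (p + 1)) = 0)
    (hsum : Summable (fun p => Real.sqrt (mseq p - mseq (p + 1))))
    (δ : ℝ) (hδ : 0 < δ) (N : ℕ)
    (hD : ∀ p, N ≤ p → (D p * (D p)ᵀ - δ • (1 : Matrix (Fin s) (Fin s) ℝ)).PosSemidef)
    :
    ∃ Bs : Matrix (Fin m) (Fin s) ℝ, Tendsto B atTop (nhds Bs) :=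
  stmt_18_general A1 A2 W1 X1 C B D mseq hm heq1 heq2 heq3 heq4 hsum δ hδ N hD
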